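/- Let n ≥ 3 be an integer, let k ≥ 2 be even, and let K be a field whose characteristic is zero or a prime not dividing λ_{(3,k)} = Σ_{i=0}^{k} (−1)^i (binom(k,i))^3. In the quotient ring K[X_1,…,X_n]/(X_1^{k+1},…,X_n^{k+1}), with A_i the image of X_i, the element [(∏_{i=2}^{n} (A_1 − A_i)) · (A_2 − A_3)]^k is nonzero (it equals λ_{(3,k)}·A_1^k⋯A_n^k, a nonzero multiple of the nonzero top monomial). -/

import Mathlib

/-!
Modulo the monomial ideal `(X_i ^ (k+1))`, a polynomial vanishes only if its coefficient of
`X_1^k ⋯ X_n^k` does. For `i ≥ 4` the variable `X_i` occurs only in the factor `(X_1 - X_i)^k`,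
which therefore has to contribute `(-X_i)^k`; what is left is the coefficient of
`(X_1 X_2 X_3)^k` in `((X_1 - X_2)(X_1 - X_3)(X_2 - X_3))^k`, which is `λ_{(3,k)}`. In positive
characteristic the hypothesis says exactly that this is nonzero; in characteristic zero it is
Dixon's identity `λ_{(3,2m)} (m!)^3 = (-1)^m (3m)!`, proved from the recurrence
`(m+1)^2 λ_{(3,2m+2)} + 3(3m+1)(3m+2) λ_{(3,2m)} = 0` by telescoping against a Zeilberger
certificate.
-/

open MvPolynomial Finset

/-- `λ_{(3,k)}` in the paper's notation. -/
def altChooseCubeSum (k : ℕ) : ℤ :=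
  ∑ i ∈ range (k + 1), (-1) ^ i * (k.choose i : ℤ) ^ 3

/-- Zeilberger's algorithm applied to `(-1)^j (2n choose j)^3` yields the certificate
`dixonCertificate` below, built on this polynomial. -/
def dixonCertificatePoly (n k : ℚ) : ℚ :=
  -116 - 784*n - 2084*n^2 - 2728*n^3 - 1760*n^4 - 448*n^5
  + (207 + 1113*n + 2214*n^2 + 1932*n^3 + 624*n^4)*k
  + (-147 - 594*n - 792*n^2 - 348*n^3)*k^2
  + (48 + 132*n + 90*n^2)*k^3
  + (-6 - 9*n)*k^4

noncomputable def dixonCertificate (n j : ℕ) : ℚ :=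
  (-1) ^ (j + 1) * ((2 * n).choose j : ℚ) ^ 3 * dixonCertificatePoly n (j + 1) /
    (2 * (2 * n + 1 - j) ^ 3)

lemma dixonCertificatePoly_spec (n j : ℚ) :
    -(2 * n + 1 - j) ^ 3 * dixonCertificatePoly n (j + 2) -
        (j + 1) ^ 3 * dixonCertificatePoly n (j + 1) =
      2 * (n + 1) ^ 2 * ((2 * n + 1) * (2 * n + 2)) ^ 3 +
        6 * (3 * n + 1) * (3 * n + 2) * ((2 * n - j) * (2 * n + 1 - j)) ^ 3 := by
  unfold dixonCertificatePoly
  ring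

lemma dixonCertificate_succ_sub (n j : ℕ) (hj : j + 1 ≤ 2 * n) :
    dixonCertificate n (j + 1) - dixonCertificate n j =
      (-1) ^ (j + 1) * ((n + 1) ^ 2 * ((2 * n + 2).choose (j + 1) : ℚ) ^ 3 +
        3 * (3 * n + 1) * (3 * n + 2) * ((2 * n).choose (j + 1) : ℚ) ^ 3) := by
  have hj' : (j : ℚ) + 1 ≤ 2 * n := by exact_mod_cast hj
  have hA : (2 * n - j : ℚ) ≠ 0 := by linarith
  have hB : (2 * n + 1 - j : ℚ) ≠ 0 := by linarith
  have hu : ((2 * n).choose (j + 1) : ℚ) * (j + 1) = (2 * n).choose j * (2 * n - j) := by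
    have := congrArg (Nat.cast (R := ℚ)) (Nat.choose_succ_right_eq (2 * n) j)
    push_cast [Nat.cast_sub (by omega : j ≤ 2 * n)] at this
    exact this
  have hc1 : ((2 * n).choose (j + 1) : ℚ) * (2 * n + 1) =
      (2 * n + 1).choose (j + 1) * (2 * n - j) := by
    have := congrArg (Nat.cast (R := ℚ)) (Nat.choose_mul_succ_eq (2 * n) (j + 1))
    push_cast [Nat.cast_sub (by omega : j ≤ 2 * n)] at this
    linear_combination this
  have hc2 : ((2 * n + 1).choose (j + 1) : ℚ) * (2 * n + 2) =
      (2 * n + 2).choose (j + 1) * (2 * n + 1 - j) := by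
    have := congrArg (Nat.cast (R := ℚ)) (Nat.choose_mul_succ_eq (2 * n + 1) (j + 1))
    push_cast [Nat.cast_sub (by omega : j ≤ 2 * n + 1)] at this
    linear_combination this
  have hc : ((2 * n + 2).choose (j + 1) : ℚ) * ((2 * n - j) * (2 * n + 1 - j)) =
      (2 * n).choose (j + 1) * ((2 * n + 1) * (2 * n + 2)) := by
    linear_combination (-(2 * n - j : ℚ)) * hc2 - (2 * n + 2 : ℚ) * hc1
  simp only [dixonCertificate]
  push_cast
  rw [show (2 * n + 1 - (j + 1) : ℚ) = 2 * n - j by ring, show (j : ℚ) + 1 + 1 = j + 2 by ring,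
    div_sub_div _ _ (by positivity) (by positivity), div_eq_iff (by positivity)]
  linear_combination
    2 * (-1) ^ (j + 1) * ((2 * n).choose (j + 1) : ℚ) ^ 3 * dixonCertificatePoly_spec n j
    - 4 * (-1) ^ (j + 1) * (n + 1 : ℚ) ^ 2 * (congrArg (· ^ 3) hc)
    + 2 * (-1) ^ (j + 1) * dixonCertificatePoly n (j + 1) * (congrArg (· ^ 3) hu)

lemma cast_altChooseCubeSum_eq_sum_range {k N : ℕ} (h : k < N) :
    (altChooseCubeSum k : ℚ) = ∑ i ∈ range N, (-1) ^ i * (k.choose i : ℚ) ^ 3 := by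
  rw [altChooseCubeSum]
  push_cast
  refine sum_subset (range_subset_range.2 h) fun i _ hi => ?_
  rw [Nat.choose_eq_zero_of_lt (by simpa using hi)]
  simp

lemma altChooseCubeSum_two_mul_recurrence (n : ℕ) :
    ((n : ℤ) + 1) ^ 2 * altChooseCubeSum (2 * (n + 1)) +
      3 * (3 * n + 1) * (3 * n + 2) * altChooseCubeSum (2 * n) = 0 := by
  set L : ℕ → ℚ := fun i => (-1) ^ i * ((n + 1) ^ 2 * ((2 * n + 2).choose i : ℚ) ^ 3 +
    3 * (3 * n + 1) * (3 * n + 2) * ((2 * n).choose i : ℚ) ^ 3) with hL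
  have hsum : ((n : ℚ) + 1) ^ 2 * altChooseCubeSum (2 * (n + 1)) +
      3 * (3 * n + 1) * (3 * n + 2) * altChooseCubeSum (2 * n) =
        ∑ i ∈ range (2 * n + 3), L i := by
    rw [cast_altChooseCubeSum_eq_sum_range (by omega : 2 * (n + 1) < 2 * n + 3),
      cast_altChooseCubeSum_eq_sum_range (by omega : 2 * n < 2 * n + 3), mul_sum, mul_sum,
      ← sum_add_distrib]
    refine sum_congr rfl fun i _ => ?_
    rw [hL, show 2 * (n + 1) = 2 * n + 2 by ring]
    ring
  have htel : ∑ i ∈ range (2 * n), L (i + 1) =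
      dixonCertificate n (2 * n) - dixonCertificate n 0 := by
    rw [← sum_range_sub]
    exact sum_congr rfl fun j hj => (dixonCertificate_succ_sub n j (by simpa using hj)).symm
  have hodd : (-1 : ℚ) ^ (2 * n + 1) = -1 := by simp [pow_succ, pow_mul]
  have heven : (-1 : ℚ) ^ (2 * n + 2) = 1 := by simp [pow_succ, pow_mul]
  have hL1 : L (2 * n + 1) = -((n + 1) ^ 2 * (2 * n + 2) ^ 3) := by
    have h : (2 * n + 2).choose (2 * n + 1) = 2 * n + 2 := Nat.choose_succ_self_right (2 * n + 1)
    simp only [hL, hodd, h, Nat.choose_eq_zero_of_lt (Nat.lt_succ_self (2 * n))]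
    push_cast
    ring
  have hL2 : L (2 * n + 2) = (n + 1) ^ 2 := by
    simp [hL, heven, Nat.choose_eq_zero_of_lt]
  have hG0 : dixonCertificate n 0 = -dixonCertificatePoly n 1 / (2 * (2 * n + 1) ^ 3) := by
    simp [dixonCertificate, neg_div]
  have hG : dixonCertificate n (2 * n) = -dixonCertificatePoly n (2 * n + 1) / 2 := by
    simp [dixonCertificate, hodd, neg_div]
  suffices ((n : ℚ) + 1) ^ 2 * altChooseCubeSum (2 * (n + 1)) +
      3 * (3 * n + 1) * (3 * n + 2) * altChooseCubeSum (2 * n) = 0 by exact_mod_cast this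
  rw [hsum, sum_range_succ, sum_range_succ, sum_range_succ', htel, hL1, hL2, hG0, hG]
  simp only [hL, pow_zero, Nat.choose_zero_right, dixonCertificatePoly]
  field_simp
  ring

open Nat in
theorem altChooseCubeSum_two_mul_mul_factorial_pow (m : ℕ) :
    altChooseCubeSum (2 * m) * (m ! : ℤ) ^ 3 = (-1) ^ m * (3 * m)! := by
  induction m with
  | zero => simp [altChooseCubeSum]
  | succ m ih =>
    have hrec := altChooseCubeSum_two_mul_recurrence m
    rw [show 3 * (m + 1) = 3 * m + 1 + 1 + 1 by ring, factorial_succ, factorial_succ,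
      factorial_succ, factorial_succ]
    push_cast
    linear_combination ((m : ℤ) + 1) * (m ! : ℤ) ^ 3 * hrec -
      3 * ((m : ℤ) + 1) * (3 * m + 1) * (3 * m + 2) * ih

theorem altChooseCubeSum_two_mul_ne_zero (m : ℕ) : altChooseCubeSum (2 * m) ≠ 0 := by
  refine left_ne_zero_of_mul (b := (m.factorial : ℤ) ^ 3) ?_
  rw [altChooseCubeSum_two_mul_mul_factorial_pow]
  exact mul_ne_zero (pow_ne_zero _ (by norm_num)) (by exact_mod_cast (3 * m).factorial_ne_zero)

namespace MvPolynomial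

variable {σ R : Type*} [CommRing R]

lemma coeff_eq_zero_of_notMem_vars {p : MvPolynomial σ R} {j : σ} {d : σ →₀ ℕ}
    (hj : j ∉ p.vars) (hd : d j ≠ 0) : coeff d p = 0 := by
  by_contra h
  exact hd (mem_support_notMem_vars_zero (mem_support_iff.mpr h) hj)

lemma X_sub_X_pow_eq_sum_monomial (a b : σ) (k : ℕ) :
    (X a - X b : MvPolynomial σ R) ^ k = ∑ c ∈ range (k + 1),
      monomial (Finsupp.single a c + Finsupp.single b (k - c))
        ((-1 : R) ^ (c + k) * k.choose c) := by
  rw [sub_pow]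
  refine sum_congr rfl fun c _ => ?_
  rw [X_pow_eq_monomial, X_pow_eq_monomial, ← mul_one ((-1 : R) ^ (c + k) * _),
    ← C_mul_monomial, ← one_mul (1 : R), ← monomial_mul]
  simp only [map_mul, map_pow, map_neg, map_one, map_natCast, mul_one]
  ring

lemma notMem_vars_X_sub_X_pow [DecidableEq σ] {a b j : σ} (ha : j ≠ a) (hb : j ≠ b)
    (k : ℕ) :
    j ∉ ((X a - X b : MvPolynomial σ R) ^ k).vars := by
  have hX : ∀ i, (X i : MvPolynomial σ R).vars ⊆ {i} := fun i => by
    rw [vars_def]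
    intro x hx
    simpa using Multiset.subset_of_le (degrees_X' i) (Multiset.mem_toFinset.mp hx)
  intro h
  have := vars_sub_subset _ (vars_pow _ k h)
  simp only [Finset.mem_union] at this
  rcases this with h | h
  · exact ha (by simpa using hX a h)
  · exact hb (by simpa using hX b h)

lemma coeff_add_single_X_sub_X_pow_mul {a j : σ} (hja : j ≠ a) {p : MvPolynomial σ R}
    (hp : j ∉ p.vars) {m : σ →₀ ℕ} (hm : m j = 0) (k : ℕ) :
    coeff (m + Finsupp.single j k) ((X a - X j) ^ k * p) = (-1) ^ k * coeff m p := by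
  rw [X_sub_X_pow_eq_sum_monomial, sum_mul, coeff_sum, sum_eq_single 0]
  · simp [coeff_monomial_mul']
  · intro c hc hc0
    rw [coeff_monomial_mul']
    split_ifs
    · rw [coeff_eq_zero_of_notMem_vars hp, mul_zero]
      have hck : c ≤ k := mem_range_succ_iff.mp hc
      simp [hja.symm, hm]
      omega
    · rfl
  · simp

lemma coeff_add_sum_single_prod_X_sub_X_pow_mul [DecidableEq σ] {a : σ} {s : Finset σ}
    (ha : a ∉ s) {p : MvPolynomial σ R} (hp : ∀ i ∈ s, i ∉ p.vars) {m : σ →₀ ℕ}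
    (hm : ∀ i ∈ s, m i = 0) (k : ℕ) :
    coeff (m + ∑ i ∈ s, Finsupp.single i k) ((∏ i ∈ s, (X a - X i) ^ k) * p) =
      (-1) ^ (k * #s) * coeff m p := by
  induction s using Finset.induction_on generalizing p m with
  | empty => simp
  | insert j t hjt ih =>
    have hja : j ≠ a := fun h => ha (h ▸ mem_insert_self j t)
    have hat : a ∉ t := fun h => ha (mem_insert_of_mem h)
    have hp' : ∀ i ∈ t, i ∉ ((X a - X j) ^ k * p).vars := fun i hi h => by
      rcases mem_union.mp (vars_mul _ _ h) with h | h
      · exact notMem_vars_X_sub_X_pow (ne_of_mem_of_not_mem hi hat)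
          (ne_of_mem_of_not_mem hi hjt) k h
      · exact hp i (mem_insert_of_mem hi) h
    have hm' : ∀ i ∈ t, (m + Finsupp.single j k) i = 0 := fun i hi => by
      simp [hm i (mem_insert_of_mem hi), ne_of_mem_of_not_mem hi hjt |>.symm]
    rw [sum_insert hjt, prod_insert hjt, ← add_assoc, mul_assoc, mul_left_comm, ih hat hp' hm',
      coeff_add_single_X_sub_X_pow_mul hja (hp j (mem_insert_self j t))
        (hm j (mem_insert_self j t)), card_insert_of_notMem hjt]
    ring

lemma coeff_X_sub_X_pow_mul_X_sub_X_pow_mul_X_sub_X_pow {a b c : σ} (hab : a ≠ b) (hac : a ≠ c)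
    (hbc : b ≠ c) (k : ℕ) :
    coeff (Finsupp.single a k + Finsupp.single b k + Finsupp.single c k)
      ((X a - X b) ^ k * (X a - X c) ^ k * (X b - X c) ^ k : MvPolynomial σ R) =
      altChooseCubeSum k := by
  classical
  have hexp : ∀ α ∈ range (k + 1), ∀ β ∈ range (k + 1), ∀ γ ∈ range (k + 1),
      Finsupp.single a γ + Finsupp.single b (k - γ) +
          (Finsupp.single a β + Finsupp.single c (k - β)) +
          (Finsupp.single b α + Finsupp.single c (k - α)) =
        Finsupp.single a k + Finsupp.single b k + Finsupp.single c k ↔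
        β = k - α ∧ γ = α := by
    intro α hα β hβ γ hγ
    simp only [mem_range] at hα hβ hγ
    constructor
    · intro h
      have ha := DFunLike.congr_fun h a
      have hb := DFunLike.congr_fun h b
      simp [hab, hac, hbc, hab.symm] at ha hb
      omega
    · rintro ⟨rfl, rfl⟩
      ext x
      by_cases hxa : a = x <;> by_cases hxb : b = x <;> by_cases hxc : c = x <;> simp_all
  simp only [X_sub_X_pow_eq_sum_monomial, sum_mul, mul_sum, monomial_mul, coeff_sum]
  rw [altChooseCubeSum]
  push_cast
  refine sum_congr rfl fun α hα => ?_
  have hαk : α ≤ k := mem_range_succ_iff.mp hα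
  have hkα : k - α ∈ range (k + 1) := mem_range_succ_iff.mpr (Nat.sub_le k α)
  have hsign : (-1 : R) ^ (α + k) * (-1) ^ (k - α + k) * (-1) ^ (α + k) = (-1) ^ α := by
    rw [← pow_add, ← pow_add, show α + k + (k - α + k) + (α + k) = α + 2 * (2 * k) by omega,
      pow_add, pow_mul, neg_one_sq, one_pow, mul_one]
  rw [sum_eq_single_of_mem (k - α) hkα, sum_eq_single_of_mem α hα, coeff_monomial,
    if_pos ((hexp α hα (k - α) hkα α hα).mpr ⟨rfl, rfl⟩), Nat.choose_symm hαk]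
  · linear_combination (k.choose α : R) ^ 3 * hsign
  · intro γ hγ hγα
    rw [coeff_monomial, if_neg fun h => hγα ((hexp α hα _ hkα γ hγ).mp h).2]
  · intro β hβ hβα
    refine sum_eq_zero fun γ hγ => ?_
    rw [coeff_monomial, if_neg fun h => hβα ((hexp α hα β hβ γ hγ).mp h).1]

lemma coeff_sum_single_prod_X_sub_X_mul_X_sub_X_pow [Fintype σ] [DecidableEq σ] {a b c : σ}
    (hab : a ≠ b) (hac : a ≠ c) (hbc : b ≠ c) (k : ℕ) :
    coeff (∑ i, Finsupp.single i k)
      (((∏ i ∈ univ.erase a, (X a - X i)) * (X b - X c)) ^ k : MvPolynomial σ R) =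
      (-1) ^ (k * (Fintype.card σ - 3)) * altChooseCubeSum k := by
  set s : Finset σ := {a, b, c}ᶜ with hs
  have hmem : ∀ i ∈ s, i ≠ a ∧ i ≠ b ∧ i ≠ c := fun i hi => by
    simpa [hs, not_or] using hi
  have hbs : b ∉ insert c s := by simp [hs, hbc]
  have hcs : c ∉ s := by simp [hs]
  have herase : univ.erase a = insert b (insert c s) := by
    ext x
    by_cases hxb : x = b <;> by_cases hxc : x = c <;> simp [hs, hxb, hxc, hab.symm, hac.symm]
  have hcard : #s = Fintype.card σ - 3 := by
    rw [hs, card_compl, card_insert_of_notMem (by simp [hab, hac]),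
      card_insert_of_notMem (by simpa using hbc), card_singleton]
  have hsum : ∑ i, Finsupp.single i k =
      Finsupp.single a k + Finsupp.single b k + Finsupp.single c k +
        ∑ i ∈ s, Finsupp.single i k := by
    rw [← sum_add_sum_compl {a, b, c}, sum_insert (by simp [hab, hac]),
      sum_insert (by simpa using hbc), sum_singleton, hs]
    abel
  have hvars : ∀ i ∈ s, i ∉ ((X a - X b) ^ k * (X a - X c) ^ k * (X b - X c) ^ k :
      MvPolynomial σ R).vars := by
    intro i hi h
    obtain ⟨hia, hib, hic⟩ := hmem i hi
    rcases mem_union.mp (vars_mul _ _ h) with h | h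
    · rcases mem_union.mp (vars_mul _ _ h) with h | h
      · exact notMem_vars_X_sub_X_pow hia hib k h
      · exact notMem_vars_X_sub_X_pow hia hic k h
    · exact notMem_vars_X_sub_X_pow hib hic k h
  rw [herase, prod_insert hbs, prod_insert hcs, hsum, ← hcard]
  rw [show ((X a - X b) * ((X a - X c) * ∏ i ∈ s, (X a - X i)) * (X b - X c)) ^ k =
      (∏ i ∈ s, (X a - X i) ^ k) * ((X a - X b) ^ k * (X a - X c) ^ k * (X b - X c) ^ k) by
    simp only [mul_pow, prod_pow]; ring]
  rw [coeff_add_sum_single_prod_X_sub_X_pow_mul (by simp [hs]) hvars (fun i hi => ?_),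
    coeff_X_sub_X_pow_mul_X_sub_X_pow_mul_X_sub_X_pow hab hac hbc]
  obtain ⟨hia, hib, hic⟩ := hmem i hi
  simp [hia.symm, hib.symm, hic.symm]

lemma coeff_eq_zero_of_mem_span_X_pow {k : ℕ} {p : MvPolynomial σ R}
    (hp : p ∈ Ideal.span (Set.range fun i => X i ^ (k + 1))) {d : σ →₀ ℕ}
    (hd : ∀ i, d i ≤ k) :
    coeff d p = 0 := by
  have hgen : Set.range (fun i => (X i : MvPolynomial σ R) ^ (k + 1)) =
      (fun s => monomial s 1) '' Set.range fun i => Finsupp.single i (k + 1) := by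
    rw [← Set.range_comp]
    simp [Function.comp_def, X_pow_eq_monomial]
  rw [hgen, mem_ideal_span_monomial_image] at hp
  by_contra h
  obtain ⟨_, ⟨i, rfl⟩, hle⟩ := hp d (mem_support_iff.mpr h)
  have := hle i
  simp only [Finsupp.single_eq_same] at this
  exact absurd (hd i) (by omega)

end MvPolynomial

/-- For `n ≥ 3`, even `k ≥ 2`, and a field `K` of characteristic zero or a prime not
dividing `λ_{(3,k)} = Σ_{i=0}^{k} (−1)^i (binom(k,i))^3`, in the quotient ring
`K[X_1,…,X_n]/(X_1^{k+1},…,X_n^{k+1})` (indices `0,…,n-1` here), the element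
`[(∏_{i=2}^{n} (A_1 − A_i)) · (A_2 − A_3)]^k` is nonzero. -/
theorem xi_ne_zero_of_char (K : Type*) [Field K] (n k : ℕ) (hn : 3 ≤ n)
    (hkeven : Even k)
    (hchar : CharZero K ∨ ∃ p : ℕ, p.Prime ∧ CharP K p ∧
      ¬ (p : ℤ) ∣ ∑ i ∈ Finset.range (k + 1), (-1 : ℤ) ^ i * (Nat.choose k i : ℤ) ^ 3)
    (I : Ideal (MvPolynomial (Fin n) K))
    (hI : I = Ideal.span (Set.range fun i : Fin n => (X i : MvPolynomial (Fin n) K) ^ (k + 1)))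
    (A : Fin n → MvPolynomial (Fin n) K ⧸ I)
    (hA : ∀ i, A i = Ideal.Quotient.mk I (X i)) :
    ((∏ i ∈ univ.erase ⟨0, by omega⟩, (A ⟨0, by omega⟩ - A i)) *
        (A ⟨1, by omega⟩ - A ⟨2, by omega⟩)) ^ k ≠ 0 := by
  have hlambda : (altChooseCubeSum k : K) ≠ 0 := by
    rcases hchar with hchar | ⟨p, -, hp, hdvd⟩
    · obtain ⟨m, rfl⟩ := hkeven
      exact_mod_cast two_mul m ▸ altChooseCubeSum_two_mul_ne_zero m
    · rwa [Ne, CharP.intCast_eq_zero_iff K p]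
  obtain rfl : A = fun i => Ideal.Quotient.mk I (X i) := funext hA
  subst hI
  simp only [← map_sub, ← map_prod, ← map_mul, ← map_pow, Ne,
    Ideal.Quotient.eq_zero_iff_mem]
  intro hmem
  have htop := coeff_eq_zero_of_mem_span_X_pow hmem (d := ∑ i, Finsupp.single i k)
    (fun i => by simp [Finsupp.finsetSum_apply, Finsupp.single_apply])
  rw [coeff_sum_single_prod_X_sub_X_mul_X_sub_X_pow (by simp [Fin.ext_iff])
    (by simp [Fin.ext_iff]) (by simp [Fin.ext_iff])] at htop
  exact mul_ne_zero (pow_ne_zero _ (neg_ne_zero.mpr one_ne_zero)) hlambda htop
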